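/- Let F = (X_1, …, X_n) with X_i ∈ ℝ^{d×d_i} be a matrix frame, and for t ∈ ℝ^n set Q(t) = ∑_{i=1}^n e^{t_i} X_i·X_iᵀ and Φ(t) = log det(Q(t)). Then for every t ∈ ℝ^n and every i ∈ {1,…,n}, ∂Φ/∂t_i(t) = (∑_{S∈𝒜, i∈S} |S_i|·e^{∑_{ℓ∈S}|S_ℓ|t_ℓ}·Δ_S) / (∑_{S∈𝒜} e^{∑_{ℓ∈S}|S_ℓ|t_ℓ}·Δ_S), the denominator being det(Q(t)) > 0. -/

import Mathlib

open scoped BigOperators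
open Matrix

namespace MFrames

/-- The squared Frobenius norm of a real matrix. -/
noncomputable def frobSq {α β : Type*} [Fintype α] [Fintype β] (X : Matrix α β ℝ) : ℝ :=
  ∑ i, ∑ j, X i j ^ 2

variable {d n : ℕ} {m : Fin n → ℕ}

/-- Squared distance between two tuples of matrices. -/
noncomputable def dist2 (F G : ∀ i : Fin n, Matrix (Fin d) (Fin (m i)) ℝ) : ℝ :=
  ∑ i, frobSq (F i - G i)

/-- The frame operator `∑ Xᵢ Xᵢᵀ`. -/
noncomputable def frameOp (F : ∀ i : Fin n, Matrix (Fin d) (Fin (m i)) ℝ) :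
    Matrix (Fin d) (Fin d) ℝ :=
  ∑ i, F i * (F i)ᵀ

/-- `F` is a matrix frame: `∑ Xᵢ Xᵢᵀ` is positive definite. -/
def IsMatrixFrame (F : ∀ i : Fin n, Matrix (Fin d) (Fin (m i)) ℝ) : Prop :=
  (frameOp F).PosDef

/-- `F` is an ε-nearly equal-norm Parseval matrix frame. -/
def NearlyENParseval (ε : ℝ) (F : ∀ i : Fin n, Matrix (Fin d) (Fin (m i)) ℝ) : Prop :=
  (frameOp F - (1 - ε) • (1 : Matrix (Fin d) (Fin d) ℝ)).PosSemidef ∧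
  ((1 + ε) • (1 : Matrix (Fin d) (Fin d) ℝ) - frameOp F).PosSemidef ∧
  ∀ i, (1 - ε) * ((d : ℝ) / n) ≤ frobSq (F i) ∧ frobSq (F i) ≤ (1 + ε) * ((d : ℝ) / n)

/-- `F` is an equal-norm Parseval matrix frame. -/
def EqualNormParseval (F : ∀ i : Fin n, Matrix (Fin d) (Fin (m i)) ℝ) : Prop :=
  frameOp F = 1 ∧ ∀ i, frobSq (F i) = (d : ℝ) / n

/-- The columns of the concatenated matrix `[X₁ | … | Xₙ]`. -/
def col (F : ∀ i : Fin n, Matrix (Fin d) (Fin (m i)) ℝ) (p : (i : Fin n) × Fin (m i)) :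
    Fin d → ℝ :=
  fun r => F p.1 r p.2

/-- `F` is generic: `n > d` and any `d` of the columns of `[X₁ | … | Xₙ]` are linearly
independent (hence a basis of `ℝ^d`). -/
def Generic (F : ∀ i : Fin n, Matrix (Fin d) (Fin (m i)) ℝ) : Prop :=
  d < n ∧ ∀ S : Finset ((i : Fin n) × Fin (m i)), S.card = d →
    LinearIndependent ℝ (fun p : S => col F (p : (i : Fin n) × Fin (m i)))

/-- Column span of a matrix. -/
def colSpan {k : ℕ} (X : Matrix (Fin d) (Fin k) ℝ) : Submodule ℝ (Fin d → ℝ) :=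
  Submodule.span ℝ (Set.range Xᵀ)

/-- The orbit polytope `K_F` of a tuple of matrices. -/
def orbitPolytope (F : ∀ i : Fin n, Matrix (Fin d) (Fin (m i)) ℝ) : Set (Fin n → ℝ) :=
  {c | (∀ i, 0 ≤ c i) ∧ (∑ i, c i = d) ∧
    ∀ I : Finset (Fin n),
      ∑ i ∈ I, c i ≤ (Module.finrank ℝ ↥(⨆ i ∈ I, colSpan (F i)) : ℝ)}

/-- `Φ_F(t) = log det (∑ e^{tᵢ} Xᵢ Xᵢᵀ)`. -/
noncomputable def Phi (F : ∀ i : Fin n, Matrix (Fin d) (Fin (m i)) ℝ) (t : Fin n → ℝ) : ℝ :=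
  Real.log (∑ i, Real.exp (t i) • (F i * (F i)ᵀ)).det

/-- The objective function `Φ_F(t) - ⟨t, c⟩` whose infimum over `t` is `f_F(c)`. -/
noncomputable def obj (F : ∀ i : Fin n, Matrix (Fin d) (Fin (m i)) ℝ)
    (c : Fin n → ℝ) (t : Fin n → ℝ) : ℝ :=
  Phi F t - ∑ i, t i * c i

/-- `Δ_S` for `S ∈ 𝒜`, where `S` is encoded as a function `σ` assigning to each `i` a subset
`σ i ⊆ {1,…,dᵢ}` of the columns of `Xᵢ` (with `i ∈ S` iff `σ i ≠ ∅`). -/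
noncomputable def Delta (F : ∀ i : Fin n, Matrix (Fin d) (Fin (m i)) ℝ)
    (σ : ∀ i : Fin n, Finset (Fin (m i))) : ℝ :=
  (∑ i, ∑ k ∈ σ i, Matrix.of (fun r s : Fin d => F i r k * F i s k)).det

/-- The index set `𝒜`: collections of subsets of columns with `d` columns in total. -/
def indexA (d : ℕ) (m : Fin n → ℕ) : Finset (∀ i : Fin n, Finset (Fin (m i))) :=
  Finset.univ.filter fun σ => (∑ i, (σ i).card) = d

/-- Membership in the semialgebraic set `𝕍(F, c)`.  (Summing `(σ i).card • ⋯` over all of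
`𝒜` is the same as summing `|Sᵢ| • ⋯` over those `S ∈ 𝒜` with `i ∈ S`.) -/
noncomputable def inVariety (F : ∀ i : Fin n, Matrix (Fin d) (Fin (m i)) ℝ)
    (c ξ : Fin n → ℝ) : Prop :=
  (∀ i, 0 < ξ i) ∧ ∀ i,
    (∑ σ ∈ indexA d m, ((σ i).card : ℝ) * (∏ l, ξ l ^ (σ l).card) * Delta F σ)
      = c i * ∑ σ ∈ indexA d m, (∏ l, ξ l ^ (σ l).card) * Delta F σ

/-- `A` transforms `(F, c)` into a radial isotropic frame. -/
noncomputable def TransformsToRIF (F : ∀ i : Fin n, Matrix (Fin d) (Fin (m i)) ℝ)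
    (c : Fin n → ℝ) (A : Matrix (Fin d) (Fin d) ℝ) : Prop :=
  ∑ i, (c i / frobSq (A * F i)) • ((A * F i) * (A * F i)ᵀ) = 1

/-- Columns of `X` all orthogonal to the subspace `T`, i.e. `Col(X) ⊆ T^⊥`. -/
def colsPerp {k : ℕ} (X : Matrix (Fin d) (Fin k) ℝ) (T : Submodule ℝ (Fin d → ℝ)) : Prop :=
  ∀ x ∈ T, Xᵀ.mulVec x = 0

end MFrames

/-
Write `Q(t)` as `∑ₚ e^{t_{i(p)}} uₚ uₚᵀ`, where `uₚ` runs over the columns of all the `Xᵢ`.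
Expanding `det (∑ₚ bₚ uₚ uₚᵀ)` multilinearly in the rows gives a sum over maps `f` from rows to
columns in which only injective `f` survive; grouping them by their image `T` (a `d`-set of
columns) gives the Cauchy–Binet-type identity
`det (∑ₚ bₚ uₚ uₚᵀ) = ∑_{|T| = d} (∏_{p ∈ T} bₚ) det (∑_{p ∈ T} uₚ uₚᵀ)`.
A `d`-set of columns is exactly an `S ∈ 𝒜`, so `det Q(t) = ∑_S e^{∑ |S_ℓ| t_ℓ} Δ_S`, and the
formula is the logarithmic derivative of this exponential sum in the direction `eᵢ`.
The sum is positive since `Q(t) - (minᵢ e^{tᵢ}) ∑ Xᵢ Xᵢᵀ` is positive semidefinite.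
-/

open Finset

namespace Matrix

section GramExpansion

variable {R ι κ : Type*} [CommRing R] [Fintype κ] [DecidableEq κ]

def gramExpansionTerm (u : ι → κ → R) (f : κ → ι) : R :=
  (∏ r, u (f r) r) * det (of fun r => u (f r))

theorem gramExpansionTerm_eq_zero_of_not_injective (u : ι → κ → R) {f : κ → ι}
    (hf : ¬ Function.Injective f) : gramExpansionTerm u f = 0 := by
  obtain ⟨r, r', hrr', hne⟩ := Function.not_injective_iff.mp hf
  rw [gramExpansionTerm, det_zero_of_row_eq hne (funext fun s => by simp [hrr']), mul_zero]

variable [Fintype ι]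

theorem det_sum_smul_vecMulVec_self_eq_sum_fun (u : ι → κ → R) (b : ι → R) :
    det (∑ p, b p • vecMulVec (u p) (u p)) =
      ∑ f : κ → ι, (∏ r, b (f r)) * gramExpansionTerm u f := by
  have hrows : ∑ p, b p • vecMulVec (u p) (u p) = fun r => ∑ p, (b p * u p r) • u p := by
    ext r s
    simp [Matrix.sum_apply, vecMulVec_apply, mul_assoc]
  rw [hrows]
  refine (detRowAlternating.toMultilinearMap.map_sum _).trans (sum_congr rfl fun f _ => ?_)
  refine (detRowAlternating.toMultilinearMap.map_smul_univ _ _).trans ?_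
  simp only [smul_eq_mul, prod_mul_distrib, gramExpansionTerm, mul_assoc]
  rfl

variable [DecidableEq ι]

theorem det_sum_smul_vecMulVec_self_eq_sum_injective (u : ι → κ → R) (b : ι → R) :
    det (∑ p, b p • vecMulVec (u p) (u p)) =
      ∑ f with Function.Injective f, (∏ r, b (f r)) * gramExpansionTerm u f := by
  rw [det_sum_smul_vecMulVec_self_eq_sum_fun, sum_filter_of_ne]
  intro f _ hf
  by_contra hinj
  exact hf (by rw [gramExpansionTerm_eq_zero_of_not_injective u hinj, mul_zero])

theorem det_sum_vecMulVec_self_eq_sum_image_eq (u : ι → κ → R) {T : Finset ι}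
    (hT : #T = Fintype.card κ) :
    det (∑ p ∈ T, vecMulVec (u p) (u p)) =
      ∑ f with Function.Injective f ∧ univ.image f = T, gramExpansionTerm u f := by
  have hind : ∑ p ∈ T, vecMulVec (u p) (u p) =
      ∑ p, (if p ∈ T then 1 else 0 : R) • vecMulVec (u p) (u p) := by
    simp [ite_smul, sum_ite_mem]
  rw [hind, det_sum_smul_vecMulVec_self_eq_sum_injective, sum_filter, sum_filter]
  refine sum_congr rfl fun f _ => ?_
  by_cases hinj : Function.Injective f
  · have himage : (∀ r, f r ∈ T) ↔ univ.image f = T := by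
      refine ⟨fun h => eq_of_subset_of_card_le (by simpa [subset_iff] using h) ?_,
        fun h r => h ▸ mem_image_of_mem f (mem_univ r)⟩
      rw [card_image_of_injective _ hinj, card_univ, hT]
    simp only [prod_boole, mem_univ, true_implies, hinj, true_and, if_true, himage, ite_mul,
      one_mul, zero_mul]
  · simp [hinj]

theorem det_sum_smul_vecMulVec_self (u : ι → κ → R) (b : ι → R) :
    det (∑ p, b p • vecMulVec (u p) (u p)) =
      ∑ T ∈ powersetCard (Fintype.card κ) univ,
        (∏ p ∈ T, b p) * det (∑ p ∈ T, vecMulVec (u p) (u p)) := by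
  have hmaps : ∀ f ∈ ({f | Function.Injective f} : Finset (κ → ι)),
      univ.image f ∈ powersetCard (Fintype.card κ) univ := fun f hf => by
    simp [card_image_of_injective _ (mem_filter.mp hf).2]
  rw [det_sum_smul_vecMulVec_self_eq_sum_injective, ← sum_fiberwise_of_maps_to hmaps]
  refine sum_congr rfl fun T hT => ?_
  rw [det_sum_vecMulVec_self_eq_sum_image_eq u (mem_powersetCard.mp hT).2, mul_sum,
    filter_filter]
  refine sum_congr rfl fun f hf => ?_
  obtain ⟨hinj, rfl⟩ := (mem_filter.mp hf).2
  rw [prod_image fun x _ y _ h => hinj h]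

end GramExpansion

theorem posDef_sum_smul {n ι : Type*} [Fintype n] [Fintype ι] {A : ι → Matrix n n ℝ}
    (hA : ∀ i, (A i).PosSemidef) (hsum : (∑ i, A i).PosDef) {c : ι → ℝ} (hc : ∀ i, 0 < c i) :
    (∑ i, c i • A i).PosDef := by
  cases isEmpty_or_nonempty ι
  · simpa [univ_eq_empty] using hsum
  obtain ⟨i₀, hi₀⟩ := Finite.exists_min c
  have hsplit : ∑ i, c i • A i = c i₀ • ∑ i, A i + ∑ i, (c i - c i₀) • A i := by
    simp [smul_sum, sub_smul]
  rw [hsplit]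
  exact (hsum.smul (hc i₀)).add_posSemidef
    (posSemidef_sum _ fun i _ => (hA i).smul (sub_nonneg.mpr (hi₀ i)))

end Matrix

theorem Finset.sum_powersetCard_sigma {ι M : Type*} [Fintype ι] [DecidableEq ι] {α : ι → Type*}
    [∀ i, Fintype (α i)] [∀ i, DecidableEq (α i)] [AddCommMonoid M] (k : ℕ)
    (g : Finset ((i : ι) × α i) → M) :
    ∑ T ∈ powersetCard k univ, g T =
      ∑ σ : ∀ i, Finset (α i) with ∑ i, #(σ i) = k, g (univ.sigma σ) := by
  have hsigma : ∀ T : Finset ((i : ι) × α i), univ.sigma (fun i => {a | ⟨i, a⟩ ∈ T}) = T :=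
    fun T => by ext ⟨i, a⟩; simp
  refine sum_nbij' (fun T i => {a | ⟨i, a⟩ ∈ T}) (fun σ => univ.sigma σ) ?_ ?_ ?_ ?_ ?_
  · intro T hT
    simpa [← card_sigma, hsigma] using hT
  · intro σ hσ
    simpa [card_sigma] using hσ
  · intro T _
    exact hsigma T
  · intro σ _
    ext i a
    simp
  · intro T _
    simp only [hsigma]

theorem Real.hasDerivAt_log_sum_exp_mul {ι : Type*} (s : Finset ι) (a k D : ι → ℝ)
    (h : ∑ σ ∈ s, Real.exp (a σ) * D σ ≠ 0) :
    HasDerivAt (fun x => Real.log (∑ σ ∈ s, Real.exp (a σ + k σ * x) * D σ))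
      ((∑ σ ∈ s, k σ * Real.exp (a σ) * D σ) / ∑ σ ∈ s, Real.exp (a σ) * D σ) 0 := by
  have hterm : ∀ σ ∈ s, HasDerivAt (fun x => Real.exp (a σ + k σ * x) * D σ)
      (k σ * Real.exp (a σ) * D σ) 0 := fun σ _ => by
    simpa [mul_comm] using
      (((hasDerivAt_id (0 : ℝ)).const_mul (k σ)).const_add (a σ)).exp.mul_const (D σ)
  simpa using (HasDerivAt.fun_sum hterm).log (by simpa using h)

namespace MFrames

section

variable {d n : ℕ} {m : Fin n → ℕ}

theorem sum_smul_mul_transpose_eq (F : ∀ i : Fin n, Matrix (Fin d) (Fin (m i)) ℝ)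
    (c : Fin n → ℝ) :
    ∑ i, c i • (F i * (F i)ᵀ) = ∑ p, c p.1 • vecMulVec (col F p) (col F p) := by
  ext r s
  simp [Matrix.sum_apply, Matrix.mul_apply, vecMulVec_apply, col, mul_sum, ← univ_sigma_univ,
    sum_sigma]

theorem Delta_eq_det_sum_sigma (F : ∀ i : Fin n, Matrix (Fin d) (Fin (m i)) ℝ)
    (σ : ∀ i : Fin n, Finset (Fin (m i))) :
    Delta F σ = det (∑ p ∈ univ.sigma σ, vecMulVec (col F p) (col F p)) := by
  rw [sum_sigma]
  rfl

theorem sum_mul_add_smul_single (a t : Fin n → ℝ) (i : Fin n) (s : ℝ) :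
    ∑ l, a l * (t + s • (Pi.single i 1 : Fin n → ℝ)) l = ∑ l, a l * t l + a i * s := by
  simp [mul_add, sum_add_distrib, Pi.single_apply]

theorem det_sum_smul_mul_transpose (F : ∀ i : Fin n, Matrix (Fin d) (Fin (m i)) ℝ)
    (c : Fin n → ℝ) :
    (∑ i, c i • (F i * (F i)ᵀ)).det = ∑ σ ∈ indexA d m, (∏ l, c l ^ #(σ l)) * Delta F σ := by
  rw [sum_smul_mul_transpose_eq, det_sum_smul_vecMulVec_self, Fintype.card_fin,
    sum_powersetCard_sigma]
  refine sum_congr rfl fun σ _ => ?_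
  rw [Delta_eq_det_sum_sigma, prod_sigma]
  simp

theorem posDef_sum_smul_mul_transpose {F : ∀ i : Fin n, Matrix (Fin d) (Fin (m i)) ℝ}
    (hF : IsMatrixFrame F) {c : Fin n → ℝ} (hc : ∀ i, 0 < c i) :
    (∑ i, c i • (F i * (F i)ᵀ)).PosDef :=
  posDef_sum_smul (fun i => by simpa using posSemidef_self_mul_conjTranspose (F i)) hF hc

end

/-- **Lemma (partial derivatives of `Φ`, combinatorial form).**  For a matrix frame `F`,
`∂Φ/∂tᵢ(t) = (∑_{S∈𝒜, i∈S} |Sᵢ| e^{∑_{ℓ∈S}|S_ℓ|t_ℓ} Δ_S) / (∑_{S∈𝒜} e^{∑_{ℓ∈S}|S_ℓ|t_ℓ} Δ_S)`,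
the denominator being `det Q(t) > 0`. -/
theorem partial_deriv_Phi_formula {d n : ℕ} {m : Fin n → ℕ}
    (F : ∀ i : Fin n, Matrix (Fin d) (Fin (m i)) ℝ) (hF : IsMatrixFrame F)
    (t : Fin n → ℝ) (i : Fin n) :
    HasDerivAt (fun s : ℝ => Phi F (t + s • (Pi.single i 1 : Fin n → ℝ)))
      ((∑ σ ∈ indexA d m, ((σ i).card : ℝ) *
          Real.exp (∑ l, ((σ l).card : ℝ) * t l) * Delta F σ) /
        (∑ σ ∈ indexA d m, Real.exp (∑ l, ((σ l).card : ℝ) * t l) * Delta F σ)) 0 ∧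
    (∑ σ ∈ indexA d m, Real.exp (∑ l, ((σ l).card : ℝ) * t l) * Delta F σ)
      = (∑ j, Real.exp (t j) • (F j * (F j)ᵀ)).det ∧
    0 < ∑ σ ∈ indexA d m, Real.exp (∑ l, ((σ l).card : ℝ) * t l) * Delta F σ := by
  have hdet : ∀ t' : Fin n → ℝ, (∑ j, Real.exp (t' j) • (F j * (F j)ᵀ)).det =
      ∑ σ ∈ indexA d m, Real.exp (∑ l, ((σ l).card : ℝ) * t' l) * Delta F σ := fun t' => by
    simp only [det_sum_smul_mul_transpose, Real.exp_sum, Real.exp_nat_mul]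
  have hpos := (posDef_sum_smul_mul_transpose hF fun j => Real.exp_pos (t j)).det_pos
  refine ⟨?_, (hdet t).symm, hdet t ▸ hpos⟩
  have hPhi : (fun s : ℝ => Phi F (t + s • (Pi.single i 1 : Fin n → ℝ))) = fun s =>
      Real.log (∑ σ ∈ indexA d m,
        Real.exp (∑ l, ((σ l).card : ℝ) * t l + ((σ i).card : ℝ) * s) * Delta F σ) := by
    funext s
    simp only [Phi, hdet, sum_mul_add_smul_single]
  rw [hPhi]
  exact Real.hasDerivAt_log_sum_exp_mul _ _ _ _ (hdet t ▸ hpos.ne')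

end MFrames
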